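/- For ℓ odd, ℓ ≥ 7, in the graph H* (K_{ℓ-2} on v_0,...,v_{ℓ-3} colored c(v_iv_j)=i+j plus v_{ℓ-2} joined to v_{ℓ-3} and v_{ℓ-4} with colors 2ℓ-5 and 2ℓ-6), the intersection of the color sets of all rainbow Hamiltonian paths starting at v_0 is empty. -/

import Mathlib

/-!
Every colour of `H*` is the index sum `i + j` of its ends, so the path that visits
`v_0, …, v_{ℓ-2}` in order with `v_a` and `v_{a+1}` exchanged (`1 ≤ a ≤ ℓ - 4`) has colours
`1, 3, 5, …, 2ℓ - 5` except that `2a - 1` and `2a + 3` are replaced by `2a` and `2a + 2`.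
These paths are rainbow and Hamiltonian, and for every colour `k` some choice of `a` avoids `k`.
-/

/-- Color of the pair `{i,j}`: `i+j` within `K_{ℓ-2}` (indices `≤ ℓ-3`); the two special
edges at `v_{ℓ-2}` (index `ℓ-2`) get colors `2ℓ-5`/`2ℓ-6`. -/
def colFun (ℓ i j : ℕ) : ℕ :=
  if max i j ≤ ℓ - 3 then min i j + max i j
  else (if min i j = ℓ - 3 then 2*ℓ-5 else 2*ℓ-6)

theorem colFun_symm (ℓ i j : ℕ) : colFun ℓ i j = colFun ℓ j i := by
  unfold colFun; simp only [min_comm i j, max_comm i j]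

/-- The edge coloring of `H* = H \ x` as a function on unordered pairs of vertices. -/
def colS (ℓ : ℕ) : Sym2 (Fin (ℓ-1)) → ℕ :=
  Sym2.lift ⟨fun i j => colFun ℓ (i : ℕ) (j : ℕ), fun i j => colFun_symm ℓ i j⟩

/-- The graph `H* = H \ x`: `K_{ℓ-2}` on `v_0,…,v_{ℓ-3}` (indices `0,…,ℓ-3`), plus the
vertex `v_{ℓ-2}` (index `ℓ-2`) joined to `v_{ℓ-3}` and `v_{ℓ-4}`. -/
def HGstar (ℓ : ℕ) : SimpleGraph (Fin (ℓ-1)) :=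
  SimpleGraph.fromRel (fun i j =>
    ((i : ℕ) ≤ ℓ - 3 ∧ (j : ℕ) ≤ ℓ - 3) ∨
    ((i : ℕ) = ℓ - 2 ∧ ((j : ℕ) = ℓ - 3 ∨ (j : ℕ) = ℓ - 4)))

namespace SimpleGraph

theorem exists_isHamiltonian_walk_of_bijective {V : Type*} [DecidableEq V] {G : SimpleGraph V}
    {n : ℕ} {f : Fin (n + 1) → V} {u : V} (hf : f.Bijective) (hu : f 0 = u)
    (hadj : ∀ i : Fin n, G.Adj (f i.castSucc) (f i.succ)) :
    ∃ (w : V) (p : G.Walk u w), p.IsHamiltonian ∧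
      p.edges = List.ofFn fun i : Fin n => s(f i.castSucc, f i.succ) := by
  subst hu
  have hchain : (List.ofFn f).IsChain G.Adj := by
    rw [List.isChain_iff_getElem]
    intro i hi
    simp only [List.getElem_ofFn]
    exact hadj ⟨i, by simpa using hi⟩
  have hne : List.ofFn f ≠ [] := by simp
  have hsupp := Walk.support_ofSupport hne hchain
  refine ⟨_, (Walk.ofSupport _ hne hchain).copy (by simp) rfl, fun v => ?_, ?_⟩
  · rw [Walk.support_copy, hsupp]
    exact List.count_eq_one_of_mem (List.nodup_ofFn.2 hf.1) (List.mem_ofFn.2 (hf.2 v))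
  · rw [Walk.edges_copy, Walk.edges_eq_zipWith_support, hsupp]
    refine List.ext_getElem (by simp) fun i _ _ => ?_
    simp only [List.getElem_zipWith, List.getElem_tail, List.getElem_ofFn]
    rfl

end SimpleGraph

theorem colS_eq_add_of_adj {ℓ : ℕ} {x y : Fin (ℓ - 1)} (h : (HGstar ℓ).Adj x y) :
    colS ℓ s(x, y) = x + y := by
  simp only [HGstar, SimpleGraph.fromRel_adj, ne_eq, Fin.ext_iff] at h
  simp only [colS, Sym2.lift_mk, colFun, Nat.max_def, Nat.min_def]
  split_ifs <;> omega

theorem swap_succ_lt {n a i : ℕ} (ha : a + 1 < n) (hi : i < n) : Equiv.swap a (a + 1) i < n := by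
  rw [Equiv.swap_apply_def]
  split_ifs <;> omega

def swapPath (ℓ a : ℕ) (ha : a + 4 ≤ ℓ) (i : Fin (ℓ - 2 + 1)) : Fin (ℓ - 1) :=
  ⟨Equiv.swap a (a + 1) i, swap_succ_lt (by omega) (by omega)⟩

def swapColor (a i : ℕ) : ℕ :=
  Equiv.swap a (a + 1) i + Equiv.swap a (a + 1) (i + 1)

section SwapPath

variable {ℓ a : ℕ}

theorem swapPath_bijective (ha : a + 4 ≤ ℓ) : (swapPath ℓ a ha).Bijective := by
  rw [Fintype.bijective_iff_injective_and_card]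
  refine ⟨fun i j h => Fin.ext ((Equiv.swap a (a + 1)).injective (congrArg Fin.val h)), ?_⟩
  simp only [Fintype.card_fin]
  omega

theorem swapPath_zero (ha1 : 1 ≤ a) (ha : a + 4 ≤ ℓ) : swapPath ℓ a ha 0 = ⟨0, by omega⟩ := by
  ext
  simp only [swapPath, Fin.val_zero]
  exact Equiv.swap_apply_of_ne_of_ne (by omega) (by omega)

theorem adj_swapPath (ha : a + 4 ≤ ℓ) (i : Fin (ℓ - 2)) :
    (HGstar ℓ).Adj (swapPath ℓ a ha i.castSucc) (swapPath ℓ a ha i.succ) := by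
  have hi := i.isLt
  simp only [HGstar, SimpleGraph.fromRel_adj, swapPath, ne_eq, Fin.ext_iff, Fin.val_castSucc,
    Fin.val_succ, Equiv.swap_apply_def]
  split_ifs <;> omega

theorem swapColor_eq (a i : ℕ) :
    swapColor a i = if i + 1 = a then 2 * a else if i = a + 1 then 2 * a + 2 else 2 * i + 1 := by
  simp only [swapColor, Equiv.swap_apply_def]
  split_ifs <;> omega

theorem swapColor_injective (a : ℕ) : (swapColor a).Injective := by
  intro i j h
  simp only [swapColor_eq] at h
  split_ifs at h <;> omega

theorem exists_isHamiltonian_swapPath (ha1 : 1 ≤ a) (ha : a + 4 ≤ ℓ) :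
    ∃ (w : Fin (ℓ - 1)) (p : (HGstar ℓ).Walk ⟨0, by omega⟩ w), p.IsHamiltonian ∧
      p.edges.map (colS ℓ) = List.ofFn fun i : Fin (ℓ - 2) => swapColor a i := by
  obtain ⟨w, p, hp, hedges⟩ := SimpleGraph.exists_isHamiltonian_walk_of_bijective
    (swapPath_bijective ha) (swapPath_zero ha1 ha) (adj_swapPath ha)
  refine ⟨w, p, hp, ?_⟩
  rw [hedges, List.map_ofFn]
  congr 1
  funext i
  exact colS_eq_add_of_adj (adj_swapPath ha i)

end SwapPath

theorem exists_swapColor_ne {ℓ : ℕ} (hℓ : 7 ≤ ℓ) (k : ℕ) :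
    ∃ a, 1 ≤ a ∧ a + 4 ≤ ℓ ∧ ∀ i < ℓ - 2, swapColor a i ≠ k := by
  -- `k` is an odd colour dropped by the swap at `a`, an even colour it does not add, or too large.
  obtain ⟨a, ha1, ha, hk⟩ : ∃ a, 1 ≤ a ∧ a + 4 ≤ ℓ ∧
      (k = 2 * a - 1 ∨ k = 2 * a + 3 ∨ (k % 2 = 0 ∧ k ≠ 2 * a ∧ k ≠ 2 * a + 2) ∨ 2 * ℓ - 3 ≤ k) := by
    rcases Nat.even_or_odd' k with ⟨m, rfl | rfl⟩
    · exact if hm : m ≤ 2 then ⟨3, by omega⟩ else ⟨1, by omega⟩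
    · exact if hm : m ≤ 1 then ⟨m + 1, by omega⟩
        else if hm' : m ≤ ℓ - 3 then ⟨m - 1, by omega⟩ else ⟨1, by omega⟩
  refine ⟨a, ha1, ha, fun i hi => ?_⟩
  rw [swapColor_eq]
  split_ifs <;> omega

/-- for odd `ℓ ≥ 7`, the intersection of the color sets of all rainbow
Hamiltonian paths of `H*` starting at `v_0` is empty. -/
theorem stmt11 (ℓ : ℕ) (hℓ : 7 ≤ ℓ) :
    {k : ℕ | ∀ (w : Fin (ℓ-1)) (p : (HGstar ℓ).Walk ⟨0, by omega⟩ w),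
        p.IsHamiltonian → (p.edges.map (colS ℓ)).Nodup →
        k ∈ p.edges.map (colS ℓ)} = ∅ := by
  refine Set.eq_empty_of_forall_notMem fun k hk => ?_
  obtain ⟨a, ha1, ha, hka⟩ := exists_swapColor_ne hℓ k
  obtain ⟨w, p, hp, hcolors⟩ := exists_isHamiltonian_swapPath ha1 ha
  have hrainbow : (p.edges.map (colS ℓ)).Nodup := by
    rw [hcolors, List.nodup_ofFn]
    exact fun i j h => Fin.ext (swapColor_injective a h)
  have hmem := hk w p hp hrainbow
  rw [hcolors, List.mem_ofFn] at hmem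
  obtain ⟨i, hi⟩ := hmem
  exact hka i i.isLt hi
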